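/- arXiv:2309.00182 — 3 statements merged into one kernel-verified Lean document; each statement's English description precedes it below -/
import Mathlib

section
/- For every integer n ≥ 6, f(n, 6, 14) ≥ (5/6)·binom(n,2). -/
/-!
The 15 edges inside six vertices of a (6,14)-coloring show at least 14 colors, so they
contain at most one repetition. Hence every color class has at most two edges, and the four
edges of two repeated colors span at least seven vertices. Enlarge the two edges of each
repeated color to a 4-set; two of these 4-sets then cover seven vertices, so they share at
most one, their six pairs are disjoint, and there are at most `C(n,2)/6` repeated colors.
Counting edges by color, `C(n,2) ≤ #colors + #repeated colors ≤ #colors + C(n,2)/6`.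
-/

open Finset

/-- The set of colors used by the edge-coloring `χ` on the edges (2-element subsets)
contained in the vertex set `S`. -/
def colorsIn {n : ℕ} {α : Type*} [DecidableEq α]
    (χ : Finset (Fin n) → α) (S : Finset (Fin n)) : Finset α :=
  (S.powersetCard 2).image χ

/-- The generalized Ramsey number `f(n,p,q)`: the minimum number of colors in an
edge-coloring of `K_n` such that every set of `p` vertices spans at least `q` colors. -/
noncomputable def genRamsey (n p q : ℕ) : ℕ :=
  sInf {C : ℕ | ∃ χ : Finset (Fin n) → Fin C,
    ∀ S : Finset (Fin n), S.card = p → q ≤ (colorsIn χ S).card}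

/-- A hypergraph (edge set `E`) on vertex set `Fin n` is `(s,k)`-free if every set of `s`
vertices contains at most `k - 1` (i.e. fewer than `k`) edges. -/
def IsSKFree {n : ℕ} (s k : ℕ) (E : Finset (Finset (Fin n))) : Prop :=
  ∀ S : Finset (Fin n), S.card = s → (E.filter (fun e => e ⊆ S)).card < k

/-- `F^(r)(n; s, k)`: the maximum number of edges in an `(s,k)`-free `r`-uniform
hypergraph on `n` vertices. -/
noncomputable def Fval (r n s k : ℕ) : ℕ :=
  sSup {m : ℕ | ∃ E : Finset (Finset (Fin n)),
    (∀ e ∈ E, e.card = r) ∧ IsSKFree s k E ∧ E.card = m}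

/-- `G^(r)(n; s, k)`: the maximum number of edges, counted with multiplicity, in an
`r`-uniform multi-hypergraph (multiplicity function `μ`) on `n` vertices in which every
set of `s` vertices contains, with multiplicity, at most `k - 1` edges. -/
noncomputable def Gval (r n s k : ℕ) : ℕ :=
  sSup {m : ℕ | ∃ μ : Finset (Fin n) → ℕ,
    (∀ e, μ e ≠ 0 → e.card = r) ∧
    (∀ S : Finset (Fin n), S.card = s → ∑ e ∈ S.powersetCard r, μ e < k) ∧
    ∑ e ∈ (univ : Finset (Fin n)).powersetCard r, μ e = m}

/-- `H^(4)(n; 2ℓ, ℓ-1)`: the maximum number of edges of a 4-uniform hypergraph on `n`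
vertices that is `(2ℓ, ℓ-1)`-free, is `(2i+1, i)`-free for all `2 ≤ i ≤ ℓ-2`, and in
which every vertex has degree `0` or degree at least `ℓ-1`. -/
noncomputable def Hval (n ℓ : ℕ) : ℕ :=
  sSup {m : ℕ | ∃ E : Finset (Finset (Fin n)),
    (∀ e ∈ E, e.card = 4) ∧
    IsSKFree (2 * ℓ) (ℓ - 1) E ∧
    (∀ i, 2 ≤ i → i ≤ ℓ - 2 → IsSKFree (2 * i + 1) i E) ∧
    (∀ v : Fin n, (E.filter (fun e => v ∈ e)).card = 0 ∨
      ℓ - 1 ≤ (E.filter (fun e => v ∈ e)).card) ∧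
    E.card = m}

theorem Finset.card_image_add_two_le {α β : Type*} [DecidableEq α] [DecidableEq β]
    {s : Finset α} {χ : α → β} {e f g h : α} (he : e ∈ s) (hg : g ∈ s) (heg : e ≠ g)
    (hf : f ∈ s \ {e, g}) (hh : h ∈ s \ {e, g}) (hef : χ e = χ f) (hgh : χ g = χ h) :
    #(s.image χ) + 2 ≤ #s := by
  have hsub : s.image χ ⊆ (s \ {e, g}).image χ := by
    intro x hx
    obtain ⟨t, ht, rfl⟩ := mem_image.1 hx
    by_cases hte : t = e
    · exact mem_image.2 ⟨f, hf, by rw [hte, hef]⟩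
    by_cases htg : t = g
    · exact mem_image.2 ⟨h, hh, by rw [htg, hgh]⟩
    exact mem_image_of_mem χ (by simp [ht, hte, htg])
  have hcard : #(s \ {e, g}) + #{e, g} = #s :=
    card_sdiff_add_card_eq_card (by simp [insert_subset_iff, he, hg])
  rw [card_pair heg] at hcard
  have := (card_le_card hsub).trans card_image_le
  omega

theorem Finset.card_mul_choose_two_le {α ι : Type*} [Fintype α] [DecidableEq α]
    {B : Finset ι} {R : ι → Finset α} {k : ℕ} (hR : ∀ i ∈ B, #(R i) = k)
    (hinter : (B : Set ι).Pairwise fun i j => #(R i ∩ R j) ≤ 1) :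
    #B * k.choose 2 ≤ (Fintype.card α).choose 2 := by
  have hdisj : (B : Set ι).PairwiseDisjoint fun i => (R i).powersetCard 2 := by
    intro i hi j hj hij
    refine disjoint_left.2 fun t hti htj => ?_
    have := card_le_card (subset_inter (mem_powersetCard.1 hti).1 (mem_powersetCard.1 htj).1)
    have := hinter hi hj hij
    have := (mem_powersetCard.1 hti).2
    omega
  calc #B * k.choose 2 = ∑ i ∈ B, #((R i).powersetCard 2) := by
        rw [sum_congr rfl fun i hi => by rw [card_powersetCard, hR i hi], sum_const, smul_eq_mul]
    _ = #(B.biUnion fun i => (R i).powersetCard 2) := (card_biUnion hdisj).symm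
    _ ≤ #((univ : Finset α).powersetCard 2) :=
        card_le_card <| biUnion_subset.2 fun i _ t ht =>
          mem_powersetCard.2 ⟨subset_univ t, (mem_powersetCard.1 ht).2⟩
    _ = (Fintype.card α).choose 2 := by rw [card_powersetCard, card_univ]

def IsPQColoring {n : ℕ} {κ : Type*} [DecidableEq κ] (χ : Finset (Fin n) → κ) (p q : ℕ) :
    Prop :=
  ∀ S : Finset (Fin n), #S = p → q ≤ #(colorsIn χ S)

theorem exists_isPQColoring_genRamsey (n : ℕ) {p q : ℕ} (hq : q ≤ p.choose 2) :
    ∃ χ : Finset (Fin n) → Fin (genRamsey n p q), IsPQColoring χ p q := by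
  refine Nat.sInf_mem (s := {C | ∃ χ : Finset (Fin n) → Fin C, IsPQColoring χ p q})
    ⟨_, Fintype.equivFin _, fun S hS => ?_⟩
  rwa [colorsIn, card_image_of_injective _ (Fintype.equivFin _).injective, card_powersetCard, hS]

section Coloring

variable {n : ℕ} {κ : Type*} [DecidableEq κ] {χ : Finset (Fin n) → κ}

def colorClass (χ : Finset (Fin n) → κ) (c : κ) : Finset (Finset (Fin n)) :=
  {e ∈ (univ : Finset (Fin n)).powersetCard 2 | χ e = c}

def repeatedColors [Fintype κ] (χ : Finset (Fin n) → κ) : Finset κ :=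
  {c | 2 ≤ #(colorClass χ c)}

theorem mem_colorClass {c : κ} {e : Finset (Fin n)} :
    e ∈ colorClass χ c ↔ #e = 2 ∧ χ e = c := by
  simp [colorClass, mem_powersetCard]

theorem seven_le_card_union (hn : 6 ≤ n) (hχ : IsPQColoring χ 6 14)
    {e f g h : Finset (Fin n)} (he : #e = 2) (hf : #f = 2) (hg : #g = 2) (hh : #h = 2)
    (heg : e ≠ g) (hfe : f ≠ e) (hfg : f ≠ g) (hhe : h ≠ e) (hhg : h ≠ g)
    (hef : χ e = χ f) (hgh : χ g = χ h) : 7 ≤ #(e ∪ f ∪ g ∪ h) := by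
  by_contra! hlt
  obtain ⟨S, hsub, hS⟩ := exists_superset_card_eq (s := e ∪ f ∪ g ∪ h) (n := 6) (by omega)
    (by rwa [Fintype.card_fin])
  obtain ⟨⟨⟨heS, hfS⟩, hgS⟩, hhS⟩ := by simpa only [union_subset_iff] using hsub
  have hrepeat : #(colorsIn χ S) + 2 ≤ #(S.powersetCard 2) :=
    card_image_add_two_le (mem_powersetCard.2 ⟨heS, he⟩) (mem_powersetCard.2 ⟨hgS, hg⟩) heg
      (by simp [mem_powersetCard, hfS, hf, hfe, hfg])
      (by simp [mem_powersetCard, hhS, hh, hhe, hhg]) hef hgh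
  rw [card_powersetCard, hS] at hrepeat
  have := hχ S hS
  have : Nat.choose 6 2 = 15 := rfl
  omega

theorem card_colorClass_le_two (hn : 6 ≤ n) (hχ : IsPQColoring χ 6 14) (c : κ) :
    #(colorClass χ c) ≤ 2 := by
  by_contra! hlt
  obtain ⟨t, hts, ht⟩ := exists_subset_card_eq hlt
  obtain ⟨a, b, d, hab, had, hbd, rfl⟩ := card_eq_three.1 ht
  obtain ⟨ha, hca⟩ := mem_colorClass.1 (hts (by simp : a ∈ {a, b, d}))
  obtain ⟨hb, hcb⟩ := mem_colorClass.1 (hts (by simp : b ∈ {a, b, d}))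
  obtain ⟨hd, hcd⟩ := mem_colorClass.1 (hts (by simp : d ∈ {a, b, d}))
  have h7 := seven_le_card_union hn hχ ha hd hb hd hab had.symm hbd.symm had.symm hbd.symm
    (hca.trans hcd.symm) (hcb.trans hcd.symm)
  rw [union_eq_left.2 (subset_union_right.trans subset_union_left)] at h7
  have := card_union_le (a ∪ d) b
  have := card_union_le a d
  omega

theorem card_inter_le_one_of_repeated (hn : 6 ≤ n) (hχ : IsPQColoring χ 6 14)
    {c c' : κ} (hcc' : c ≠ c') {e f g h R R' : Finset (Fin n)}
    (he : e ∈ colorClass χ c) (hf : f ∈ colorClass χ c) (hef : e ≠ f)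
    (hg : g ∈ colorClass χ c') (hh : h ∈ colorClass χ c') (hgh : g ≠ h)
    (hR : e ∪ f ⊆ R) (hR' : g ∪ h ⊆ R') (hR4 : #R = 4) (hR'4 : #R' = 4) :
    #(R ∩ R') ≤ 1 := by
  rw [mem_colorClass] at he hf hg hh
  have hne : ∀ {x y}, χ x = c → χ y = c' → x ≠ y := fun hx hy hxy =>
    hcc' (hx.symm.trans ((congrArg χ hxy).trans hy))
  have h7 := seven_le_card_union hn hχ he.1 hf.1 hg.1 hh.1 (hne he.2 hg.2) hef.symm
    (hne hf.2 hg.2) (hne he.2 hh.2).symm hgh.symm (he.2.trans hf.2.symm)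
    (hg.2.trans hh.2.symm)
  have hunion : e ∪ f ∪ g ∪ h ⊆ R ∪ R' := by
    rw [union_assoc]
    exact union_subset_union hR hR'
  have := card_le_card hunion
  have := card_union_add_card_inter R R'
  omega

variable [Fintype κ]

theorem six_mul_card_repeatedColors_le (hn : 6 ≤ n) (hχ : IsPQColoring χ 6 14) :
    6 * #(repeatedColors χ) ≤ n.choose 2 := by
  have hspan : ∀ c ∈ repeatedColors χ, ∃ e f R : Finset (Fin n), e ∈ colorClass χ c ∧
      f ∈ colorClass χ c ∧ e ≠ f ∧ e ∪ f ⊆ R ∧ #R = 4 := by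
    intro c hc
    obtain ⟨e, he, f, hf, hef⟩ := one_lt_card.1 (mem_filter.1 hc).2
    have h4 : #(e ∪ f) ≤ 4 :=
      (card_union_le e f).trans_eq (by rw [(mem_colorClass.1 he).1, (mem_colorClass.1 hf).1])
    obtain ⟨R, hR, hR4⟩ := exists_superset_card_eq h4 (by rw [Fintype.card_fin]; omega)
    exact ⟨e, f, R, he, hf, hef, hR, hR4⟩
  choose! e f R he hf hef hR hR4 using hspan
  have := card_mul_choose_two_le hR4 fun c hc c' hc' hcc' =>
    card_inter_le_one_of_repeated hn hχ hcc' (he c hc) (hf c hc) (hef c hc) (he c' hc')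
      (hf c' hc') (hef c' hc') (hR c hc) (hR c' hc') (hR4 c hc) (hR4 c' hc')
  rwa [Fintype.card_fin, show Nat.choose 4 2 = 6 from rfl, mul_comm] at this

theorem choose_two_le_card_add_card_repeatedColors (hn : 6 ≤ n) (hχ : IsPQColoring χ 6 14) :
    n.choose 2 ≤ Fintype.card κ + #(repeatedColors χ) :=
  calc n.choose 2 = #((univ : Finset (Fin n)).powersetCard 2) := by
        rw [card_powersetCard, card_univ, Fintype.card_fin]
    _ = ∑ c, #(colorClass χ c) := card_eq_sum_card_fiberwise fun e _ => mem_univ (χ e)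
    _ ≤ ∑ c, (1 + if 2 ≤ #(colorClass χ c) then 1 else 0) :=
        sum_le_sum fun c _ => by
          have := card_colorClass_le_two hn hχ c
          split_ifs <;> omega
    _ = Fintype.card κ + #(repeatedColors χ) := by
        rw [sum_add_distrib, repeatedColors, card_filter, sum_const, card_univ, smul_eq_mul,
          mul_one]

theorem five_mul_choose_two_le_six_mul_card (hn : 6 ≤ n) (hχ : IsPQColoring χ 6 14) :
    5 * n.choose 2 ≤ 6 * Fintype.card κ := by
  have := six_mul_card_repeatedColors_le hn hχ
  have := choose_two_le_card_add_card_repeatedColors hn hχ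
  omega

end Coloring

/-- For every integer `n ≥ 6`, `f(n, 6, 14) ≥ (5/6) * C(n,2)`. -/
theorem stmt_8 (n : ℕ) (hn : 6 ≤ n) :
    (5 / 6 : ℝ) * (n.choose 2 : ℝ) ≤ (genRamsey n 6 14 : ℝ) := by
  obtain ⟨χ, hχ⟩ := exists_isPQColoring_genRamsey n (p := 6) (q := 14) (by decide)
  have h := five_mul_choose_two_le_six_mul_card hn hχ
  rw [Fintype.card_fin] at h
  have : (5 * n.choose 2 : ℝ) ≤ 6 * genRamsey n 6 14 := by exact_mod_cast h
  linarith
end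

section
/- For every integer ℓ ≥ 3 and every n ≥ 2ℓ, f(n, 2ℓ, binom(2ℓ,2) − ℓ + 2) ≥ binom(n,2) − G⁽⁴⁾(n; 2ℓ, ℓ−1). -/
open Finset

/-!
Fix a colouring attaining `f` and choose a representative edge of every colour. Each
remaining edge `e`, together with the representative of its colour, spans at most four
vertices; a 4-set containing them turns these edges into a 4-uniform multi-hypergraph.
If a `2ℓ`-set `S` contains the 4-sets of some of these edges, it also contains the
representatives of their colours, so every colour of `S` occurs on an edge of `S` outside
this family. So `S` contains at most `C(2ℓ,2) - (C(2ℓ,2) - ℓ + 2) = ℓ - 2` of the 4-sets,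
the non-representative edges number at most `G⁽⁴⁾(n; 2ℓ, ℓ-1)`, and the representatives
at most `f`.
-/

theorem self_le_choose_two_two_mul (ℓ : ℕ) : ℓ ≤ (2 * ℓ).choose 2 := by
  rw [Nat.choose_two_right]
  rcases ℓ with _ | ℓ
  · simp
  · rw [Nat.le_div_iff_mul_le two_pos, show 2 * (ℓ + 1) - 1 = 2 * ℓ + 1 by omega]
    nlinarith

theorem card_add_card_image_le_card {β γ : Type*} [DecidableEq β] [DecidableEq γ]
    (f : β → γ) {A D : Finset β} (hAD : A ⊆ D)
    (hA : ∀ a ∈ A, ∃ b ∈ D \ A, f b = f a) : #A + #(D.image f) ≤ #D := by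
  have himage : D.image f ⊆ (D \ A).image f := by
    intro c hc
    obtain ⟨a, haD, rfl⟩ := mem_image.mp hc
    by_cases ha : a ∈ A
    · obtain ⟨b, hb, hba⟩ := hA a ha
      exact mem_image.mpr ⟨b, hb, hba⟩
    · exact mem_image_of_mem f (mem_sdiff.mpr ⟨haD, ha⟩)
  have := (card_le_card himage).trans card_image_le
  rw [card_sdiff_of_subset hAD] at this
  have := card_le_card hAD
  omega

theorem sum_powersetCard_le_sum_sum_powersetCard {α : Type*} [Fintype α] [DecidableEq α]
    {r s : ℕ} (hrs : r ≤ s) (hs : s ≤ Fintype.card α) (μ : Finset α → ℕ) :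
    ∑ e ∈ univ.powersetCard r, μ e ≤
      ∑ S ∈ univ.powersetCard s, ∑ e ∈ S.powersetCard r, μ e := by
  calc ∑ e ∈ univ.powersetCard r, μ e
      ≤ ∑ e ∈ univ.powersetCard r, ∑ _S ∈ {S ∈ univ.powersetCard s | e ⊆ S}, μ e := by
        refine sum_le_sum fun e he => ?_
        obtain ⟨S, heS, hS⟩ :=
          exists_superset_card_eq ((mem_powersetCard_univ.mp he).trans_le hrs) hs
        exact single_le_sum (f := fun _ => μ e) (fun _ _ => Nat.zero_le _)
          (mem_filter.mpr ⟨mem_powersetCard_univ.mpr hS, heS⟩)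
    _ = ∑ S ∈ univ.powersetCard s, ∑ e ∈ S.powersetCard r, μ e :=
        sum_comm' fun e S => by
          simp only [mem_filter, mem_powersetCard]
          tauto

theorem le_Gval {r n s k : ℕ} (hrs : r ≤ s) (hsn : s ≤ n) (μ : Finset (Fin n) → ℕ)
    (hμ : ∀ e, μ e ≠ 0 → e.card = r)
    (hfree : ∀ S : Finset (Fin n), S.card = s → ∑ e ∈ S.powersetCard r, μ e < k) :
    ∑ e ∈ univ.powersetCard r, μ e ≤ Gval r n s k := by
  refine le_csSup ⟨#((univ : Finset (Fin n)).powersetCard s) * k, ?_⟩ ⟨μ, hμ, hfree, rfl⟩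
  rintro _ ⟨ν, -, hν, rfl⟩
  calc ∑ e ∈ univ.powersetCard r, ν e
      ≤ ∑ S ∈ univ.powersetCard s, ∑ e ∈ S.powersetCard r, ν e :=
        sum_powersetCard_le_sum_sum_powersetCard hrs (by simpa using hsn) ν
    _ ≤ ∑ _S ∈ univ.powersetCard s, k :=
        sum_le_sum fun S hS => (hν S (mem_powersetCard_univ.mp hS)).le
    _ = #((univ : Finset (Fin n)).powersetCard s) * k := by rw [sum_const, smul_eq_mul]

theorem card_le_Gval_of_card_eq {ι : Type*} {r n s k : ℕ} (hrs : r ≤ s) (hsn : s ≤ n)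
    (W : Finset ι) (g : ι → Finset (Fin n)) (hg : ∀ i ∈ W, (g i).card = r)
    (hfree : ∀ S : Finset (Fin n), S.card = s → #{i ∈ W | g i ⊆ S} < k) :
    #W ≤ Gval r n s k := by
  classical
  have hsum : ∀ T : Finset (Fin n),
      ∑ f ∈ T.powersetCard r, #{i ∈ W | g i = f} = #{i ∈ W | g i ⊆ T} := by
    intro T
    rw [card_eq_sum_card_fiberwise (t := T.powersetCard r) fun i hi => by
      obtain ⟨hiW, hiT⟩ := mem_filter.mp hi
      exact mem_powersetCard.mpr ⟨hiT, hg i hiW⟩]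
    refine sum_congr rfl fun f hf => ?_
    rw [filter_filter]
    refine congrArg card (filter_congr fun i _ => ?_)
    exact ⟨fun h => ⟨h ▸ (mem_powersetCard.mp hf).1, h⟩, fun h => h.2⟩
  have hW : #{i ∈ W | g i ⊆ univ} = #W := by simp
  rw [← hW, ← hsum]
  refine le_Gval hrs hsn _ (fun f hf => ?_) fun S hS => (hsum S).symm ▸ hfree S hS
  obtain ⟨i, hi⟩ := card_pos.mp (Nat.pos_of_ne_zero hf)
  obtain ⟨hiW, rfl⟩ := mem_filter.mp hi
  exact hg i hiW

theorem card_le_Gval {ι : Type*} {r n s k : ℕ} (hrs : r ≤ s) (hsn : s ≤ n)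
    (W : Finset ι) (g : ι → Finset (Fin n)) (hg : ∀ i ∈ W, (g i).card ≤ r)
    (hfree : ∀ S : Finset (Fin n), S.card = s → #{i ∈ W | g i ⊆ S} < k) :
    #W ≤ Gval r n s k := by
  have hpad : ∀ i, ∃ v : Finset (Fin n), (g i).card ≤ r → g i ⊆ v ∧ v.card = r := fun i =>
    if h : (g i).card ≤ r then
      (exists_superset_card_eq h (by simpa using hrs.trans hsn)).imp fun _ hv _ => hv
    else ⟨∅, fun h' => absurd h' h⟩
  choose pad hpad using hpad
  refine card_le_Gval_of_card_eq hrs hsn W pad (fun i hi => (hpad i (hg i hi)).2)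
    fun S hS => lt_of_le_of_lt (card_le_card fun i hi => ?_) (hfree S hS)
  obtain ⟨hiW, hiS⟩ := mem_filter.mp hi
  exact mem_filter.mpr ⟨hiW, (hpad i (hg i hiW)).1.trans hiS⟩

theorem exists_coloring_genRamsey {n p q : ℕ} (hq : q ≤ p.choose 2) :
    ∃ χ : Finset (Fin n) → Fin (genRamsey n p q),
      ∀ S : Finset (Fin n), S.card = p → q ≤ (colorsIn χ S).card := by
  refine Nat.sInf_mem (s := {C : ℕ | ∃ χ : Finset (Fin n) → Fin C,
    ∀ S : Finset (Fin n), S.card = p → q ≤ (colorsIn χ S).card})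
    ⟨_, Fintype.equivFin (Finset (Fin n)), fun S hS => ?_⟩
  rwa [colorsIn, card_image_of_injective _ (Equiv.injective _), card_powersetCard, hS]

theorem card_add_card_colorsIn_le {n : ℕ} {α : Type*} [DecidableEq α]
    (χ : Finset (Fin n) → α) (rep : α → Finset (Fin n))
    (hrep : ∀ e ∈ (univ : Finset (Fin n)).powersetCard 2,
      (rep (χ e)).card = 2 ∧ χ (rep (χ e)) = χ e)
    (S : Finset (Fin n)) :
    #{e ∈ {e ∈ (univ : Finset (Fin n)).powersetCard 2 | e ≠ rep (χ e)} | rep (χ e) ∪ e ⊆ S} +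
      #(colorsIn χ S) ≤ S.card.choose 2 := by
  set A := {e ∈ {e ∈ (univ : Finset (Fin n)).powersetCard 2 | e ≠ rep (χ e)} | rep (χ e) ∪ e ⊆ S}
  have hA : ∀ e ∈ A, e.card = 2 ∧ e ≠ rep (χ e) ∧ rep (χ e) ⊆ S ∧ e ⊆ S := by
    intro e he
    simp only [A, mem_filter, mem_powersetCard_univ, union_subset_iff] at he
    exact ⟨he.1.1, he.1.2, he.2⟩
  rw [← card_powersetCard]
  refine card_add_card_image_le_card χ
    (fun e he => mem_powersetCard.mpr ⟨(hA e he).2.2.2, (hA e he).1⟩) fun e he => ?_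
  -- the representative of a colour occurring in `A` is an edge of `S` outside `A`
  obtain ⟨he2, -, hrepS, -⟩ := hA e he
  obtain ⟨hrep2, hχrep⟩ := hrep e (mem_powersetCard_univ.mpr he2)
  refine ⟨rep (χ e), mem_sdiff.mpr ⟨mem_powersetCard.mpr ⟨hrepS, hrep2⟩, fun hmem => ?_⟩, hχrep⟩
  exact (hA _ hmem).2.1 (by rw [hχrep])

theorem choose_two_le_add_Gval {ℓ n C : ℕ} (hℓ : 2 ≤ ℓ) (hn : 2 * ℓ ≤ n)
    (χ : Finset (Fin n) → Fin C)
    (hχ : ∀ S : Finset (Fin n), S.card = 2 * ℓ →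
      (2 * ℓ).choose 2 - ℓ + 2 ≤ (colorsIn χ S).card) :
    n.choose 2 ≤ C + Gval 4 n (2 * ℓ) (ℓ - 1) := by
  set P : Finset (Finset (Fin n)) := univ.powersetCard 2 with hP
  set rep : Fin C → Finset (Fin n) := Function.invFunOn χ P
  have hrep : ∀ e ∈ P, rep (χ e) ∈ P ∧ χ (rep (χ e)) = χ e := fun e he =>
    Function.invFunOn_pos (f := χ) (s := ↑P) ⟨e, he, rfl⟩
  have hreps : #{e ∈ P | e = rep (χ e)} ≤ C := by
    calc #{e ∈ P | e = rep (χ e)} ≤ #(univ.image rep) :=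
          card_le_card fun e he => mem_image.mpr ⟨χ e, mem_univ _, (mem_filter.mp he).2.symm⟩
      _ ≤ C := card_image_le.trans (card_fin C).le
  have hothers : #{e ∈ P | e ≠ rep (χ e)} ≤ Gval 4 n (2 * ℓ) (ℓ - 1) := by
    refine card_le_Gval (by omega) hn _ (fun e => rep (χ e) ∪ e) (fun e he => ?_)
      fun S hS => ?_
    · have heP := (mem_filter.mp he).1
      calc (rep (χ e) ∪ e).card ≤ (rep (χ e)).card + e.card := card_union_le _ _
        _ = 4 := by rw [mem_powersetCard_univ.mp heP, mem_powersetCard_univ.mp (hrep e heP).1]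
    · have hcount := card_add_card_colorsIn_le χ rep
        (fun e he => ⟨mem_powersetCard_univ.mp (hrep e he).1, (hrep e he).2⟩) S
      have hcolors := hχ S hS
      have := self_le_choose_two_two_mul ℓ
      rw [← hP, hS] at hcount
      omega
  calc n.choose 2 = #{e ∈ P | e = rep (χ e)} + #{e ∈ P | e ≠ rep (χ e)} := by
        rw [card_filter_add_card_filter_not, card_powersetCard, card_univ, Fintype.card_fin]
    _ ≤ C + Gval 4 n (2 * ℓ) (ℓ - 1) := add_le_add hreps hothers

/-- For every `ℓ ≥ 3` and `n ≥ 2ℓ`,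
`f(n, 2ℓ, C(2ℓ,2) - ℓ + 2) ≥ C(n,2) - G⁽⁴⁾(n; 2ℓ, ℓ-1)`. -/
theorem stmt_12 (ℓ : ℕ) (hℓ : 3 ≤ ℓ) (n : ℕ) (hn : 2 * ℓ ≤ n) :
    (n.choose 2 : ℝ) - (Gval 4 n (2 * ℓ) (ℓ - 1) : ℝ) ≤
      (genRamsey n (2 * ℓ) ((2 * ℓ).choose 2 - ℓ + 2) : ℝ) := by
  have hq := self_le_choose_two_two_mul ℓ
  obtain ⟨χ, hχ⟩ := exists_coloring_genRamsey (n := n) (p := 2 * ℓ)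
    (show (2 * ℓ).choose 2 - ℓ + 2 ≤ _ by omega)
  rw [sub_le_iff_le_add]
  exact_mod_cast choose_two_le_add_Gval (by omega) hn χ hχ
end

section
/- Let n ≥ 6 and let χ be an edge-coloring of K_n such that every set of 6 vertices spans at least 14 distinct colors. Then there is at most one unordered pair {e, f} of distinct edges that share a vertex and satisfy χ(e) = χ(f); that is, χ contains at most one monochromatic path on three vertices. -/
/-!
Two distinct monochromatic paths on three vertices span at most `3 + 3 = 6` vertices; extend
them to a set `S` of exactly six vertices. Among the `15` edges inside `S`, each path makes two
edges share a color, and the two coincidences are independent because the paths differ, so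
`S` spans at most `15 - 2 = 13 < 14` colors.
-/

open Finset

namespace Finset

variable {β γ : Type*} [DecidableEq β] [DecidableEq γ] {s : Finset β} {f : β → γ}

theorem image_erase_of_map_eq {a b : β} (hb : b ∈ s) (hab : a ≠ b) (hf : f a = f b) :
    (s.erase a).image f = s.image f := by
  refine (image_subset_image (erase_subset _ _)).antisymm fun x hx => ?_
  obtain ⟨y, hy, rfl⟩ := mem_image.1 hx
  obtain rfl | hya := eq_or_ne y a
  · exact hf ▸ mem_image_of_mem f (mem_erase.2 ⟨hab.symm, hb⟩)
  · exact mem_image_of_mem f (mem_erase.2 ⟨hya, hy⟩)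

theorem card_image_add_two_le_of_ne_of_ne {a b c d : β} (ha : a ∈ s) (hb : b ∈ s)
    (hc : c ∈ s) (hd : d ∈ s) (hab : a ≠ b) (hcd : c ≠ d) (hac : a ≠ c) (had : a ≠ d)
    (hfab : f a = f b) (hfcd : f c = f d) :
    #(s.image f) + 2 ≤ #s := by
  have hc' : c ∈ s.erase a := mem_erase.2 ⟨hac.symm, hc⟩
  rw [← image_erase_of_map_eq hb hab hfab,
    ← image_erase_of_map_eq (mem_erase.2 ⟨had.symm, hd⟩) hcd hfcd]
  calc #(((s.erase a).erase c).image f) + 2 ≤ #((s.erase a).erase c) + 1 + 1 :=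
        Nat.add_le_add_right card_image_le 2
    _ = #s := by rw [card_erase_add_one hc', card_erase_add_one ha]

theorem card_image_add_two_le_s18 {a b c d : β} (ha : a ∈ s) (hb : b ∈ s) (hc : c ∈ s)
    (hd : d ∈ s) (hab : a ≠ b) (hcd : c ≠ d) (hfab : f a = f b) (hfcd : f c = f d)
    (hne : ({a, b} : Finset β) ≠ {c, d}) :
    #(s.image f) + 2 ≤ #s := by
  have hnsub : ¬({a, b} : Finset β) ⊆ {c, d} := fun hsub =>
    hne (eq_of_subset_of_card_le hsub (by rw [card_pair hab, card_pair hcd]))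
  obtain ⟨x, hx, hxcd⟩ := not_subset.1 hnsub
  simp only [mem_insert, mem_singleton, not_or] at hx hxcd
  rcases hx with rfl | rfl
  · exact card_image_add_two_le_of_ne_of_ne ha hb hc hd hab hcd hxcd.1 hxcd.2 hfab hfcd
  · exact card_image_add_two_le_of_ne_of_ne hb ha hc hd hab.symm hcd hxcd.1 hxcd.2 hfab.symm hfcd

theorem card_union_le_three {e f : Finset β} (he : #e = 2) (hf : #f = 2)
    (hef : (e ∩ f).Nonempty) : #(e ∪ f) ≤ 3 := by
  have := card_union_add_card_inter e f
  have := hef.card_pos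
  omega

end Finset

/-- If `n ≥ 6` and `χ` is an edge-coloring of `K_n` in which every set of `6` vertices
spans at least `14` colors, then there is at most one unordered pair `{e, f}` of distinct
edges sharing a vertex with `χ e = χ f`: any two such pairs coincide. -/
theorem stmt_18 {n : ℕ} (hn : 6 ≤ n) {α : Type*} [DecidableEq α]
    (χ : Finset (Fin n) → α)
    (h : ∀ S : Finset (Fin n), S.card = 6 → 14 ≤ (colorsIn χ S).card) :
    ∀ e₁ f₁ e₂ f₂ : Finset (Fin n),
      e₁.card = 2 → f₁.card = 2 → e₂.card = 2 → f₂.card = 2 →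
      e₁ ≠ f₁ → e₂ ≠ f₂ →
      (e₁ ∩ f₁).Nonempty → (e₂ ∩ f₂).Nonempty →
      χ e₁ = χ f₁ → χ e₂ = χ f₂ →
      ({e₁, f₁} : Finset (Finset (Fin n))) = {e₂, f₂} := by
  intro e₁ f₁ e₂ f₂ he₁ hf₁ he₂ hf₂ hne₁ hne₂ hi₁ hi₂ hc₁ hc₂
  by_contra hne
  set U := (e₁ ∪ f₁) ∪ (e₂ ∪ f₂)
  have hU : #U ≤ 6 := (card_union_le _ _).trans <| by
    have := card_union_le_three he₁ hf₁ hi₁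
    have := card_union_le_three he₂ hf₂ hi₂
    omega
  obtain ⟨S, hUS, -, hS⟩ := exists_subsuperset_card_eq (subset_univ U) hU (by simpa using hn)
  have hedge {x : Finset (Fin n)} (hx : #x = 2) (hxU : x ⊆ U) : x ∈ S.powersetCard 2 :=
    mem_powersetCard.2 ⟨hxU.trans hUS, hx⟩
  have hdrop := card_image_add_two_le_s18 (f := χ)
    (hedge he₁ (subset_union_left.trans subset_union_left))
    (hedge hf₁ (subset_union_right.trans subset_union_left))
    (hedge he₂ (subset_union_left.trans subset_union_right))
    (hedge hf₂ (subset_union_right.trans subset_union_right)) hne₁ hne₂ hc₁ hc₂ hne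
  have h14 := h S hS
  rw [card_powersetCard, hS] at hdrop
  rw [colorsIn] at h14
  have : Nat.choose 6 2 = 15 := by decide
  omega
end
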